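/- Under the gradient update law with stability condition: if there exists ζ > 0 such that λ_min(2λ I - λ² Γ(t) Γ(t)ᵀ) ≥ ζ for all t ∈ ℕ, then ∑_{t=0}^∞ ‖x̃(t+1)‖² ≤ V(0)/ζ, where V(0) = ‖θ - θ̂(0)‖² and x̃(t+1) = Γ(t)(θ - θ̂(t)). -/

import Mathlib

/-!
The parameter error `e t = θ - θ̂ t` obeys `e (t+1) = e t - λ Γᵀ Γ e t`, so with `x̃ = Γ e` the
Lyapunov function `V = ‖e‖²` satisfies `V (t+1) = V t - x̃ᵀ (2λI - λ²ΓΓᵀ) x̃ ≤ V t - ζ ‖x̃‖²`.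
Telescoping gives `ζ ∑_{t<N} ‖x̃ (t+1)‖² ≤ V 0 - V N ≤ V 0` for every `N`.
-/

open Matrix

noncomputable def eunorm {n : ℕ} (v : Fin n → ℝ) : ℝ := Real.sqrt (v ⬝ᵥ v)

lemma sq_eunorm {n : ℕ} (v : Fin n → ℝ) : eunorm v ^ 2 = v ⬝ᵥ v :=
  Real.sq_sqrt (by simpa using dotProduct_star_self_nonneg v)

section

variable {m p : Type*} [Fintype m] [Fintype p]

open scoped MatrixOrder in
lemma Matrix.IsHermitian.mul_dotProduct_self_le_dotProduct_mulVec [DecidableEq m]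
    {M : Matrix m m ℝ} (hM : M.IsHermitian) {ζ : ℝ} (h : ∀ i, ζ ≤ hM.eigenvalues i)
    (x : m → ℝ) : ζ * (x ⬝ᵥ x) ≤ x ⬝ᵥ (M *ᵥ x) := by
  have hζM : algebraMap ℝ _ ζ ≤ M := by
    rw [algebraMap_le_iff_le_spectrum hM.isSelfAdjoint, hM.spectrum_real_eq_range_eigenvalues]
    rintro _ ⟨i, rfl⟩
    exact h i
  simpa only [star_trivial, sub_mulVec, dotProduct_sub, algebraMap_eq_diagonal,
    Pi.algebraMap_def, Algebra.algebraMap_self, RingHom.id_apply, diagonal_const_mulVec,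
    dotProduct_smul, smul_eq_mul, sub_nonneg]
    using (Matrix.le_iff.mp hζM).dotProduct_mulVec_nonneg x

lemma dotProduct_self_gradientStep [DecidableEq m] (Γ : Matrix m p ℝ) (lam : ℝ) (e : p → ℝ) :
    (e - lam • Γᵀ *ᵥ (Γ *ᵥ e)) ⬝ᵥ (e - lam • Γᵀ *ᵥ (Γ *ᵥ e)) =
      e ⬝ᵥ e -
        (Γ *ᵥ e) ⬝ᵥ (((2 * lam) • (1 : Matrix m m ℝ) - lam ^ 2 • (Γ * Γᵀ)) *ᵥ (Γ *ᵥ e)) := by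
  set x := Γ *ᵥ e
  have hcross : e ⬝ᵥ (Γᵀ *ᵥ x) = x ⬝ᵥ x := by
    rw [dotProduct_mulVec, vecMul_transpose]
  have hgram : (Γᵀ *ᵥ x) ⬝ᵥ (Γᵀ *ᵥ x) = x ⬝ᵥ ((Γ * Γᵀ) *ᵥ x) := by
    rw [← mulVec_mulVec, dotProduct_mulVec x, ← mulVec_transpose]
  simp only [dotProduct_sub, sub_dotProduct, dotProduct_smul, smul_dotProduct, smul_eq_mul,
    dotProduct_comm _ e, hcross, hgram, sub_mulVec, smul_mulVec, one_mulVec]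
  ring

end

lemma summable_and_tsum_le_of_descent {V g : ℕ → ℝ} {ζ : ℝ} (hζ : 0 < ζ)
    (hV : ∀ t, 0 ≤ V t) (hg : ∀ t, 0 ≤ g t) (hdesc : ∀ t, V (t + 1) + ζ * g t ≤ V t) :
    Summable g ∧ ∑' t, g t ≤ V 0 / ζ := by
  have htelescope : ∀ N, V N + ζ * ∑ t ∈ Finset.range N, g t ≤ V 0 := by
    intro N
    induction N with
    | zero => simp
    | succ N ih =>
      rw [Finset.sum_range_succ, mul_add]
      linarith [hdesc N]
  have hpartial : ∀ N, ∑ t ∈ Finset.range N, g t ≤ V 0 / ζ := fun N => by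
    rw [le_div_iff₀ hζ]
    linarith [htelescope N, hV N]
  exact ⟨summable_of_sum_range_le hg hpartial, Real.tsum_le_of_sum_range_le hg hpartial⟩

theorem stmt_3_general {n p : ℕ} (lam ζ : ℝ) (hζ : 0 < ζ)
    (Γ : ℕ → Matrix (Fin n) (Fin p) ℝ)
    (θ : Fin p → ℝ) (θhat : ℕ → Fin p → ℝ) (xtil : ℕ → Fin n → ℝ)
    (hx : ∀ t, xtil (t + 1) = (Γ t).mulVec (θ - θhat t))
    (hupd : ∀ t, θhat (t + 1) = θhat t + lam • (Γ t)ᵀ.mulVec (xtil (t + 1)))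
    (hM : ∀ t, ((2 * lam) • (1 : Matrix (Fin n) (Fin n) ℝ)
      - lam ^ 2 • (Γ t * (Γ t)ᵀ)).IsHermitian)
    (heig : ∀ t i, ζ ≤ (hM t).eigenvalues i) :
    Summable (fun t => (eunorm (xtil (t + 1)))^2) ∧
      ∑' t, (eunorm (xtil (t + 1)))^2 ≤ (eunorm (θ - θhat 0))^2 / ζ := by
  have herror : ∀ t, θ - θhat (t + 1) =
      (θ - θhat t) - lam • (Γ t)ᵀ *ᵥ ((Γ t) *ᵥ (θ - θhat t)) := fun t => by
    rw [hupd t, hx t, sub_add_eq_sub_sub]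
  have hdesc : ∀ t, eunorm (θ - θhat (t + 1)) ^ 2 + ζ * eunorm (xtil (t + 1)) ^ 2 ≤
      eunorm (θ - θhat t) ^ 2 := fun t => by
    simp only [sq_eunorm, herror t, dotProduct_self_gradientStep, hx t]
    linarith [(hM t).mul_dotProduct_self_le_dotProduct_mulVec (heig t) (Γ t *ᵥ (θ - θhat t))]
  exact summable_and_tsum_le_of_descent (V := fun t => eunorm (θ - θhat t) ^ 2) hζ
    (fun _ => sq_nonneg _) (fun _ => sq_nonneg _) hdesc

/-- Uniform lower bound on `λ_min(2λI - λ²ΓΓᵀ)` implies square-summability of the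
state estimation error with `∑ ‖x̃(t+1)‖² ≤ V(0)/ζ`. -/
theorem stmt_3 {n p : ℕ} (lam ζ : ℝ) (hlam : 0 < lam) (hζ : 0 < ζ)
    (Γ : ℕ → Matrix (Fin n) (Fin p) ℝ)
    (θ : Fin p → ℝ) (θhat : ℕ → Fin p → ℝ) (xtil : ℕ → Fin n → ℝ)
    (hx : ∀ t, xtil (t + 1) = (Γ t).mulVec (θ - θhat t))
    (hupd : ∀ t, θhat (t + 1) = θhat t + lam • (Γ t)ᵀ.mulVec (xtil (t + 1)))
    (hM : ∀ t, ((2 * lam) • (1 : Matrix (Fin n) (Fin n) ℝ)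
      - lam ^ 2 • (Γ t * (Γ t)ᵀ)).IsHermitian)
    (heig : ∀ t i, ζ ≤ (hM t).eigenvalues i) :
    Summable (fun t => (eunorm (xtil (t + 1)))^2) ∧
      ∑' t, (eunorm (xtil (t + 1)))^2 ≤ (eunorm (θ - θhat 0))^2 / ζ :=
  stmt_3_general lam ζ hζ Γ θ θhat xtil hx hupd hM heig
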